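/- Let U be a chi-squared random variable with k degrees of freedom and let n ≥ 1. Then for every u with u² ≥ 4k/n, P(U/n ≥ u²) ≤ exp(-n u²/8). -/

import Mathlib

open MeasureTheory ProbabilityTheory Real
open scoped NNReal

/-! Chernoff's bound at `t = 1/4`: for a standard Gaussian `Z`, `E exp(t Z²) = (1 - 2t)^(-1/2)`,
which is `√2` at `t = 1/4`, so by independence `P(U ≥ x) ≤ exp(-x/4) 2^(k/2)`. Since `log 2 < 1`,
the factor `2^(k/2)` is absorbed into `exp(x/8)` as soon as `x ≥ 4k`. -/

lemma gaussianPDFReal_zero_one_mul_exp_mul_sq (t x : ℝ) :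
    gaussianPDFReal 0 1 x * rexp (t * x ^ 2) = (√(2 * π))⁻¹ * rexp (-(1 / 2 - t) * x ^ 2) := by
  simp only [gaussianPDFReal, NNReal.coe_one, mul_one, sub_zero, mul_assoc, ← exp_add]
  ring_nf

lemma integrable_exp_mul_sq_gaussianReal {t : ℝ} (ht : t < 1 / 2) :
    Integrable (fun x ↦ rexp (t * x ^ 2)) (gaussianReal 0 1) := by
  rw [gaussianReal_of_var_ne_zero 0 one_ne_zero, gaussianPDF_def,
    integrable_withDensity_iff_integrable_smul' (by fun_prop) (by simp)]
  simp only [ENNReal.toReal_ofReal (gaussianPDFReal_nonneg 0 1 _), smul_eq_mul,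
    gaussianPDFReal_zero_one_mul_exp_mul_sq]
  exact (integrable_exp_neg_mul_sq (by linarith)).const_mul _

lemma integral_exp_mul_sq_gaussianReal {t : ℝ} (ht : t < 1 / 2) :
    ∫ x, rexp (t * x ^ 2) ∂(gaussianReal 0 1) = (√(1 - 2 * t))⁻¹ := by
  rw [integral_gaussianReal_eq_integral_smul one_ne_zero]
  simp only [smul_eq_mul, gaussianPDFReal_zero_one_mul_exp_mul_sq]
  rw [integral_const_mul, integral_gaussian, ← sqrt_inv, ← sqrt_inv, ← sqrt_mul (by positivity)]
  congr 1
  have : 0 < 1 - 2 * t := by linarith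
  field_simp

section StandardGaussian

variable {Ω : Type*} {mΩ : MeasurableSpace Ω} {μ : Measure Ω} {Z : Ω → ℝ} {t : ℝ}

lemma integrable_exp_mul_sq_of_map_eq_gaussianReal (hZ : AEMeasurable Z μ)
    (hgauss : μ.map Z = gaussianReal 0 1) (ht : t < 1 / 2) :
    Integrable (fun ω ↦ rexp (t * Z ω ^ 2)) μ := by
  have h := integrable_exp_mul_sq_gaussianReal ht
  rwa [← hgauss, integrable_map_measure (by fun_prop) hZ] at h

lemma mgf_sq_of_map_eq_gaussianReal (hZ : AEMeasurable Z μ)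
    (hgauss : μ.map Z = gaussianReal 0 1) (ht : t < 1 / 2) :
    mgf (fun ω ↦ Z ω ^ 2) μ t = (√(1 - 2 * t))⁻¹ := by
  rw [← integral_exp_mul_sq_gaussianReal ht, ← hgauss, ← mgf, mgf_map hZ (by fun_prop)]
  rfl

end StandardGaussian

lemma measureReal_le_sum_sq_le_of_map_eq_gaussianReal {ι Ω : Type*} [Fintype ι]
    {mΩ : MeasurableSpace Ω} {μ : Measure Ω} [IsProbabilityMeasure μ] {Z : ι → Ω → ℝ}
    (hmeas : ∀ i, Measurable (Z i)) (hindep : iIndepFun Z μ)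
    (hgauss : ∀ i, μ.map (Z i) = gaussianReal 0 1) (x : ℝ) {t : ℝ} (ht₀ : 0 ≤ t)
    (ht : t < 1 / 2) :
    μ.real {ω | x ≤ ∑ i, Z i ω ^ 2} ≤ rexp (-t * x) * (√(1 - 2 * t))⁻¹ ^ Fintype.card ι := by
  have hsq_meas : ∀ i, Measurable fun ω ↦ Z i ω ^ 2 := fun i ↦ (hmeas i).pow_const 2
  have hsq_indep : iIndepFun (fun i ω ↦ Z i ω ^ 2) μ :=
    hindep.comp (fun _ x ↦ x ^ 2) (fun _ ↦ measurable_id.pow_const 2)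
  have hint i := integrable_exp_mul_sq_of_map_eq_gaussianReal (hmeas i).aemeasurable (hgauss i) ht
  have hchernoff := measure_ge_le_exp_mul_mgf (X := ∑ i, fun ω ↦ Z i ω ^ 2) x ht₀
    (hsq_indep.integrable_exp_mul_sum hsq_meas (s := .univ) fun i _ ↦ hint i)
  rw [hsq_indep.mgf_sum hsq_meas] at hchernoff
  simpa [mgf_sq_of_map_eq_gaussianReal (hmeas _).aemeasurable (hgauss _) ht] using hchernoff

lemma exp_neg_div_four_mul_sqrt_two_pow_le {k : ℕ} {x : ℝ} (hx : 4 * k ≤ x) :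
    rexp (-(1 / 4) * x) * √2 ^ k ≤ rexp (-x / 8) := by
  have hlog : log √2 * k ≤ k / 2 := by
    rw [log_sqrt zero_le_two]
    nlinarith [log_two_lt_d9, (Nat.cast_nonneg k : (0 : ℝ) ≤ k)]
  rw [← exp_log (sqrt_pos.2 zero_lt_two), ← exp_nat_mul, ← exp_add, exp_le_exp]
  linarith

/-- Chi-squared tail bound (Lemma chi2). -/
theorem stmt3 {Ω : Type*} [MeasureSpace Ω] [IsProbabilityMeasure (ℙ : Measure Ω)]
    (k n : ℕ) (hn : 1 ≤ n) (Z : Fin k → Ω → ℝ)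
    (hmeas : ∀ i, Measurable (Z i))
    (hindep : iIndepFun Z ℙ)
    (hgauss : ∀ i, Measure.map (Z i) ℙ = gaussianReal 0 1)
    (u : ℝ) (hu : 4 * (k : ℝ) / n ≤ u ^ 2) :
    (ℙ {ω | u ^ 2 ≤ (∑ i, Z i ω ^ 2) / n}).toReal ≤ Real.exp (-(n : ℝ) * u ^ 2 / 8) := by
  have hn₀ : (0 : ℝ) < n := by exact_mod_cast hn
  have hevent : {ω | u ^ 2 ≤ (∑ i, Z i ω ^ 2) / n} = {ω | n * u ^ 2 ≤ ∑ i, Z i ω ^ 2} := by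
    ext ω
    rw [Set.mem_ofPred_eq, Set.mem_ofPred_eq, le_div_iff₀ hn₀, mul_comm]
  have hk : 4 * (k : ℝ) ≤ n * u ^ 2 := by
    rw [div_le_iff₀ hn₀] at hu
    linarith
  calc (ℙ {ω | u ^ 2 ≤ (∑ i, Z i ω ^ 2) / n}).toReal
      = (ℙ : Measure Ω).real {ω | n * u ^ 2 ≤ ∑ i, Z i ω ^ 2} := by rw [← measureReal_def, hevent]
    _ ≤ rexp (-(1 / 4) * (n * u ^ 2)) * √2 ^ k := by
      have hmgf : (√(1 - 2 * (1 / 4) : ℝ))⁻¹ = √2 := by norm_num [sqrt_inv]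
      refine (measureReal_le_sum_sq_le_of_map_eq_gaussianReal hmeas hindep hgauss
        (n * u ^ 2) (t := 1 / 4) (by norm_num) (by norm_num)).trans_eq ?_
      rw [hmgf, Fintype.card_fin]
    _ ≤ rexp (-(n * u ^ 2) / 8) := exp_neg_div_four_mul_sqrt_two_pow_le hk
    _ = rexp (-(n : ℝ) * u ^ 2 / 8) := by ring_nf
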